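/- arXiv:2002.03337 — 8 statements merged into one kernel-verified Lean document; each statement's English description precedes it below -/
import Mathlib

section
/- For integers i ≥ j ≥ 2, one has F_{j-1} + Σ_{k=j+1}^{i} F_{k-1} F_{k-j} = (1/5)(L_{2i-j} + (5/2) F_{j-1} − (1/2)(−1)^{i−j} L_{j-1}), where an empty sum is 0. -/
/-- The Lucas numbers: L₀ = 2, L₁ = 1, Lₖ = Lₖ₋₁ + Lₖ₋₂. -/
def lucas : ℕ → ℕ
  | 0 => 2
  | 1 => 1
  | n + 2 => lucas (n + 1) + lucas n

lemma lucas_cast (n : ℕ) : (lucas (n + 2) : ℚ) = lucas (n + 1) + lucas n := by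
  show ((lucas (n+1) + lucas n : ℕ) : ℚ) = _
  push_cast; ring

lemma fib_cast (n : ℕ) : (Nat.fib (n + 2) : ℚ) = Nat.fib (n + 1) + Nat.fib n := by
  rw [Nat.fib_add_two]; push_cast; ring

lemma five_fib (d : ℕ) : 5 * (Nat.fib (d + 1) : ℚ) = lucas (d + 2) + lucas d := by
  induction d using Nat.twoStepInduction with
  | zero => simp [lucas]; norm_num
  | one => simp [lucas, Nat.fib]; norm_num
  | more d ih1 ih2 =>
    have h1 := lucas_cast (d + 2)
    have h2 := lucas_cast d
    have h3 := fib_cast (d + 1)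
    linarith

lemma key (n : ℕ) : ∀ d : ℕ, 5 * (Nat.fib (n + d) : ℚ) * Nat.fib n
    = lucas (2 * n + d) - (-1 : ℚ) ^ n * lucas d := by
  induction n using Nat.twoStepInduction with
  | zero => intro d; simp
  | one =>
    intro d
    have := five_fib d
    simp only [Nat.fib_one, Nat.cast_one, pow_one]
    rw [show 1 + d = d + 1 by ring, show 2 * 1 + d = d + 2 by ring]
    linarith
  | more n ih1 ih2 =>
    intro d
    have e1 := ih2 (d + 1)
    have e2 := ih1 (d + 2)
    have hf : (Nat.fib (n + 2 + d) : ℚ) * Nat.fib (n + 2)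
        = Nat.fib (n + 2 + d) * Nat.fib (n + 1) + Nat.fib (n + 2 + d) * Nat.fib n := by
      rw [fib_cast n]; ring
    rw [show n + 1 + (d + 1) = n + 2 + d by ring] at e1
    rw [show n + (d + 2) = n + 2 + d by ring] at e2
    rw [show 2 * (n + 1) + (d + 1) = 2 * n + d + 3 by ring] at e1
    rw [show 2 * n + (d + 2) = 2 * n + d + 2 by ring] at e2
    have h1 := lucas_cast (2 * n + d + 2)
    have h2 := lucas_cast d
    rw [show 2 * (n + 2) + d = 2 * n + d + 2 + 2 by ring]
    have hp : (-1 : ℚ) ^ (n + 2) = (-1 : ℚ) ^ n := by ring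
    have hp1 : (-1 : ℚ) ^ (n + 1) = -(-1 : ℚ) ^ n := by ring
    rw [hp]
    rw [hp1] at e1
    linear_combination 5 * hf + e1 + e2 - h1 - (-1 : ℚ) ^ n * h2

lemma main_aux (m t : ℕ) :
    (Nat.fib (m + 1) : ℚ)
      + ∑ k ∈ Finset.Icc (m + 3) (m + 2 + t), (Nat.fib (k - 1) : ℚ) * Nat.fib (k - (m + 2))
    = (1 / 5) * ((lucas (m + 2 + 2 * t) : ℚ) + (5 / 2) * Nat.fib (m + 1)
        - (1 / 2) * (-1 : ℚ) ^ t * lucas (m + 1)) := by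
  induction t with
  | zero =>
    rw [show m + 2 + 0 = m + 2 by ring]
    rw [Finset.Icc_eq_empty (by omega)]
    simp only [Finset.sum_empty, add_zero, pow_zero, mul_one]
    have h5 := five_fib m
    have h1 := lucas_cast m
    rw [show m + 2 + 2 * 0 = m + 2 by ring]
    linarith
  | succ t ih =>
    have hins : Finset.Icc (m + 3) (m + 2 + (t + 1))
        = insert (m + 2 + t + 1) (Finset.Icc (m + 3) (m + 2 + t)) := by
      rw [show m + 2 + (t + 1) = m + 2 + t + 1 by ring]
      exact (Finset.insert_Icc_right_eq_Icc_add_one (by omega)).symm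
    rw [hins, Finset.sum_insert (by simp)]
    rw [show m + 2 + t + 1 - 1 = t + 1 + m + 1 by omega,
        show m + 2 + t + 1 - (m + 2) = t + 1 by omega]
    have hk := key (t + 1) (m + 1)
    rw [show t + 1 + (m + 1) = t + 1 + m + 1 by ring,
        show 2 * (t + 1) + (m + 1) = m + 2 + 2 * t + 1 by ring] at hk
    have h1 := lucas_cast (m + 2 + 2 * t)
    rw [show m + 2 + 2 * t + 2 = m + 2 + 2 * (t + 1) by ring] at h1
    have hp : (-1 : ℚ) ^ (t + 1) = -(-1 : ℚ) ^ t := by ring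
    rw [hp] at hk ⊢
    linarith

theorem inner_sum_formula (i j : ℕ) (hj : 2 ≤ j) (hij : j ≤ i) :
    (Nat.fib (j - 1) : ℚ) + ∑ k ∈ Finset.Icc (j + 1) i, (Nat.fib (k - 1) : ℚ) * Nat.fib (k - j)
      = (1 / 5) * ((lucas (2 * i - j) : ℚ) + (5 / 2) * Nat.fib (j - 1)
          - (1 / 2) * (-1 : ℚ) ^ (i - j) * lucas (j - 1)) := by
  obtain ⟨m, rfl⟩ := Nat.exists_eq_add_of_le hj
  obtain ⟨t, rfl⟩ := Nat.exists_eq_add_of_le hij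
  rw [show 2 + m = m + 2 by ring]
  rw [show m + 2 - 1 = m + 1 by omega,
      show 2 * (m + 2 + t) - (m + 2) = m + 2 + 2 * t by omega,
      show m + 2 + t - (m + 2) = t by omega,
      show m + 2 + 1 = m + 3 by ring]
  exact main_aux m t
end

section
/- For every integer i ≥ 2, Σ_{j=2}^{i} (−1)^j L_{j−1} L_{2i−j} = 2 + ((1+(−1)^i)/2) L_{2i−1} − L_{2i−2}. -/
lemma lucas_add_two (n : ℕ) : lucas (n + 2) = lucas (n + 1) + lucas n := rfl

lemma lucas_mul : ∀ n d : ℕ, (lucas (n + d) : ℚ) * lucas n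
    = lucas (2 * n + d) + (-1 : ℚ) ^ n * lucas d
  | 0, d => by simp [lucas]; ring
  | 1, d => by
    rcases d with _ | d
    · norm_num [lucas]
    · rw [show 2*1+(d+1) = (d+1)+2 by omega, lucas_add_two, show 1+(d+1) = d+2 by omega,
        lucas_add_two]
      push_cast [show lucas 1 = 1 from rfl]
      ring
  | (n+2), d => by
    have h1 := lucas_mul (n+1) (d+1)
    have h2 := lucas_mul n (d+2)
    rw [show (n+1)+(d+1) = n+2+d by omega, show 2*(n+1)+(d+1) = 2*n+d+3 by omega] at h1
    rw [show n+(d+2) = n+2+d by omega, show 2*n+(d+2) = 2*n+d+2 by omega] at h2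
    have c1 : (lucas (n+2) : ℚ) = lucas (n+1) + lucas n := by rw [lucas_add_two]; push_cast; ring
    have c2 : (lucas (2*(n+2)+d) : ℚ) = lucas (2*n+d+3) + lucas (2*n+d+2) := by
      rw [show 2*(n+2)+d = (2*n+d+2)+2 by omega, lucas_add_two,
        show 2*n+d+2+1 = 2*n+d+3 by omega]
      push_cast; ring
    have c3 : (lucas (d+2) : ℚ) = lucas (d+1) + lucas d := by rw [lucas_add_two]; push_cast; ring
    rw [c1, c2]
    rw [c3] at h2
    linear_combination h1 + h2

lemma lucas_odd_sum : ∀ m : ℕ, ∑ k ∈ Finset.range m, (lucas (2 * k + 1) : ℚ)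
    = lucas (2 * m) - 2
  | 0 => by simp [lucas]
  | (m+1) => by
    rw [Finset.sum_range_succ, lucas_odd_sum m,
      show 2*(m+1) = (2*m)+2 by omega, lucas_add_two]
    push_cast
    ring

lemma neg_one_sum : ∀ i : ℕ, 1 ≤ i → ∑ j ∈ Finset.Icc 2 i, (-1 : ℚ) ^ j
    = (1 + (-1 : ℚ) ^ i) / 2
  | 0, h => absurd h (by norm_num)
  | 1, _ => by norm_num
  | (i+2), _ => by
    rw [show i+2 = (i+1)+1 by omega, Finset.sum_Icc_succ_top (by omega),
      neg_one_sum (i+1) (by omega)]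
    ring

theorem sum_alt_lucas_mul_lucas (i : ℕ) (hi : 2 ≤ i) :
    ∑ j ∈ Finset.Icc 2 i, (-1 : ℚ) ^ j * lucas (j - 1) * lucas (2 * i - j)
      = 2 + ((1 + (-1 : ℚ) ^ i) / 2) * lucas (2 * i - 1) - lucas (2 * i - 2) := by
  have key : ∀ j ∈ Finset.Icc 2 i, (-1 : ℚ) ^ j * lucas (j - 1) * lucas (2 * i - j)
      = (-1 : ℚ) ^ j * lucas (2 * i - 1) - lucas (2 * (i - j) + 1) := by
    intro j hj
    simp only [Finset.mem_Icc] at hj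
    obtain ⟨h2, hji⟩ := hj
    have e1 : 2 * i - j = (j - 1) + (2 * (i - j) + 1) := by omega
    rw [e1, mul_assoc, mul_comm ((lucas (j-1) : ℚ)), lucas_mul (j-1) (2*(i-j)+1),
      show 2*(j-1) + (2*(i-j)+1) = 2*i-1 by omega]
    obtain ⟨k, rfl⟩ : ∃ k, j = k + 2 := ⟨j - 2, by omega⟩
    rw [show k+2-1 = k+1 by omega]
    have hs : ((-1:ℚ)^(k+2))^2 = 1 := by
      rw [← pow_mul, mul_comm, pow_mul]; norm_num
    linear_combination (-(lucas (2*(i-(k+2))+1) : ℚ)) * hs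
  rw [Finset.sum_congr rfl key, Finset.sum_sub_distrib, ← Finset.sum_mul,
    neg_one_sum i (by omega)]
  have reindex : ∑ j ∈ Finset.Icc 2 i, (lucas (2 * (i - j) + 1) : ℚ)
      = ∑ k ∈ Finset.range (i - 1), (lucas (2 * k + 1) : ℚ) := by
    apply Finset.sum_nbij' (fun j => i - j) (fun k => i - k)
    · intro j hj; simp only [Finset.mem_Icc] at hj; simp only [Finset.mem_range]; omega
    · intro k hk; simp only [Finset.mem_range] at hk; simp only [Finset.mem_Icc]; omega
    · intro j hj; simp only [Finset.mem_Icc] at hj; omega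
    · intro k hk; simp only [Finset.mem_range] at hk; omega
    · intro j hj; rfl
  rw [reindex, lucas_odd_sum, show 2 * (i-1) = 2*i - 2 by omega]
  ring
end

section
/- For every integer n ≥ 2, Σ_{i=2}^{n} L_i L_{i−1} = L_{2n} − (7 + (−1)^n)/2. -/
lemma lucas_key (n : ℕ) :
    (lucas (n + 1) : ℚ) * lucas n = lucas (2 * n + 1) + (-1) ^ n ∧
    (lucas n : ℚ) * lucas n = lucas (2 * n) + 2 * (-1) ^ n ∧
    (lucas (n + 1) : ℚ) * lucas (n + 1)
      = lucas (n + 1) * lucas n + lucas n * lucas n - 5 * (-1) ^ n := by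
  induction n with
  | zero => norm_num [lucas]
  | succ k ih =>
    obtain ⟨h1, h2, h3⟩ := ih
    have r1 : (lucas (k + 2) : ℚ) = lucas (k + 1) + lucas k := by
      push_cast [show lucas (k + 2) = lucas (k + 1) + lucas k from rfl]; ring
    have r2 : (lucas (2 * (k + 1) + 1) : ℚ)
        = lucas (2 * k + 1) + (lucas (2 * k + 1) + lucas (2 * k)) := by
      have e : 2 * (k + 1) + 1 = 2 * k + 3 := by ring
      rw [e, show lucas (2 * k + 3) = lucas (2 * k + 2) + lucas (2 * k + 1) from rfl,
        show lucas (2 * k + 2) = lucas (2 * k + 1) + lucas (2 * k) from rfl]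
      push_cast; ring
    have r3 : (lucas (2 * (k + 1)) : ℚ) = lucas (2 * k + 1) + lucas (2 * k) := by
      have e : 2 * (k + 1) = 2 * k + 2 := by ring
      rw [e, show lucas (2 * k + 2) = lucas (2 * k + 1) + lucas (2 * k) from rfl]
      push_cast; ring
    refine ⟨?_, ?_, ?_⟩
    · rw [r1, r2, pow_succ]; nlinarith [h1, h2, h3]
    · rw [r3, pow_succ]; nlinarith [h1, h2, h3]
    · rw [r1, pow_succ]; nlinarith [h1, h2, h3]

theorem sum_lucas_consecutive (n : ℕ) (hn : 2 ≤ n) :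
    ∑ i ∈ Finset.Icc 2 n, (lucas i : ℚ) * lucas (i - 1)
      = (lucas (2 * n) : ℚ) - (7 + (-1 : ℚ) ^ n) / 2 := by
  induction n with
  | zero => omega
  | succ m ih =>
    rcases Nat.lt_or_ge m 2 with hm | hm
    · interval_cases m
      · omega
      · norm_num [Finset.Icc_self, lucas]
    · rw [Finset.sum_Icc_succ_top (by omega), ih hm]
      have h1 := (lucas_key m).1
      have e : m + 1 - 1 = m := rfl
      rw [e]
      have e2 : 2 * (m + 1) = 2 * m + 2 := by ring
      rw [e2, show lucas (2 * m + 2) = lucas (2 * m + 1) + lucas (2 * m) from rfl]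
      push_cast
      rw [h1, pow_succ]
      ring
end

section
/- For every integer n ≥ 2, Σ_{i=2}^{n} (−1)^i L_{2i−2} = (−1)^n F_{n−1} L_n. -/
lemma lucas_add : ∀ m n : ℕ, lucas (m + n + 1)
    = Nat.fib (m + 1) * lucas (n + 1) + Nat.fib m * lucas n
  | 0, n => by simp [Nat.fib]
  | 1, n => by
    rw [show 1 + n + 1 = n + 2 from by omega]
    simp [lucas, Nat.fib]
  | m + 2, n => by
    have h1 := lucas_add (m + 1) n
    have h2 := lucas_add m n
    rw [show m + 2 + n + 1 = (m + n + 1) + 2 from by omega]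
    rw [show (m + n + 1) + 2 = ((m+1) + n + 1) + 1 from by omega,
      show lucas (((m+1)+n+1) + 1) = lucas ((m+1)+n+1) + lucas (m+n+1) from by
        rw [show (m+1)+n+1 = (m+n+1)+1 from by omega]; rfl]
    have f3 : Nat.fib (m+3) = Nat.fib (m+1) + Nat.fib (m+2) := Nat.fib_add_two
    have f2 : Nat.fib (m+2) = Nat.fib m + Nat.fib (m+1) := Nat.fib_add_two
    rw [h1, h2]
    simp only [show m+1+1 = m+2 from rfl, show m+2+1 = m+3 from rfl, f3, f2]
    ring

lemma lucas_two_mul (n : ℕ) (hn : 1 ≤ n) :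
    lucas (2 * n) = Nat.fib n * lucas (n + 1) + Nat.fib (n - 1) * lucas n := by
  obtain ⟨k, rfl⟩ := Nat.exists_eq_add_of_le hn
  have := lucas_add k (k + 1)
  rw [show k + (k + 1) + 1 = 2 * (1 + k) from by ring] at this
  simpa [Nat.add_comm] using this

theorem sum_alt_lucas_even (n : ℕ) (hn : 2 ≤ n) :
    ∑ i ∈ Finset.Icc 2 n, (-1 : ℤ) ^ i * lucas (2 * i - 2)
      = (-1 : ℤ) ^ n * Nat.fib (n - 1) * lucas n := by
  induction n, hn using Nat.le_induction with
  | base => decide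
  | succ n hn ih =>
    rw [Finset.sum_Icc_succ_top (by omega), ih]
    have h := lucas_two_mul n (by omega)
    rw [show 2 * (n + 1) - 2 = 2 * n from by omega, show n + 1 - 1 = n from rfl]
    have hL : (lucas (2 * n) : ℤ) = Nat.fib n * lucas (n + 1) + Nat.fib (n - 1) * lucas n := by
      exact_mod_cast congrArg (Nat.cast : ℕ → ℤ) h
    rw [hL, pow_succ]
    ring
end

section
/- For every integer n ≥ 2, Σ_{i=2}^{n} F_i^2 F_{i−1}^2 = −n/25 + F_{4n}/25 + (2/25)(−1)^n F_n L_n, as an identity of rational numbers. -/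
lemma lucas_q (n : ℕ) : (lucas n : ℚ) = 2 * Nat.fib (n + 1) - Nat.fib n := by
  induction n using Nat.twoStepInduction with
  | zero => simp [lucas]
  | one => norm_num [lucas, Nat.fib]
  | more n ih1 ih2 =>
      rw [lucas]
      push_cast
      rw [ih1, ih2, show n + 1 + 1 = n + 2 from rfl,
        show n + 2 + 1 = (n + 1) + 2 from rfl, Nat.fib_add_two (n := n + 1),
        Nat.fib_add_two (n := n)]
      push_cast
      ring

lemma fibq_two_mul (n : ℕ) :
    (Nat.fib (2 * n) : ℚ) = Nat.fib n * (2 * Nat.fib (n + 1) - Nat.fib n) := by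
  have h : Nat.fib n ≤ 2 * Nat.fib (n + 1) :=
    le_trans (Nat.fib_le_fib_succ) (by omega)
  rw [Nat.fib_two_mul, Nat.cast_mul, Nat.cast_sub h]
  push_cast
  ring

lemma fibq_two_mul_add_one (n : ℕ) :
    (Nat.fib (2 * n + 1) : ℚ) = Nat.fib (n + 1) ^ 2 + Nat.fib n ^ 2 := by
  rw [Nat.fib_two_mul_add_one]
  push_cast
  ring

lemma cassini (n : ℕ) :
    ((Nat.fib (n + 1) : ℚ)) ^ 2 - Nat.fib (n + 1) * Nat.fib n - (Nat.fib n : ℚ) ^ 2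
      = (-1) ^ n := by
  induction n with
  | zero => norm_num
  | succ n ih =>
      rw [Nat.fib_add_two]
      push_cast
      rw [pow_succ]
      linear_combination -ih

theorem sum_fib_sq_prod (n : ℕ) (hn : 2 ≤ n) :
    ∑ i ∈ Finset.Icc 2 n, (Nat.fib i : ℚ) ^ 2 * (Nat.fib (i - 1) : ℚ) ^ 2
      = -(n : ℚ) / 25 + (Nat.fib (4 * n) : ℚ) / 25
        + (2 / 25) * (-1 : ℚ) ^ n * Nat.fib n * lucas n := by
  induction n, hn using Nat.le_induction with
  | base =>
      rw [Finset.Icc_self, Finset.sum_singleton]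
      norm_num [show Nat.fib 8 = 21 from rfl, show Nat.fib 2 = 1 from rfl,
        show Nat.fib 1 = 1 from rfl, show lucas 2 = 3 from rfl]
  | succ n hn ih =>
      rw [Finset.sum_Icc_succ_top (by omega : 2 ≤ n + 1), ih]
      set a : ℚ := (Nat.fib n : ℚ) with ha
      set b : ℚ := (Nat.fib (n + 1) : ℚ) with hb
      have hab : (Nat.fib (n + 2) : ℚ) = a + b := by
        rw [Nat.fib_add_two]; push_cast; ring
      have h2n : (Nat.fib (2 * n) : ℚ) = a * (2 * b - a) := by
        rw [fibq_two_mul]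
      have h2n1 : (Nat.fib (2 * n + 1) : ℚ) = b ^ 2 + a ^ 2 := by
        rw [fibq_two_mul_add_one]
      have h2n2 : (Nat.fib (2 * n + 2) : ℚ) = b * (2 * a + b) := by
        rw [show 2 * n + 2 = 2 * (n + 1) from by ring, fibq_two_mul, hab]
        ring
      have h2n3 : (Nat.fib (2 * n + 3) : ℚ) = (a + b) ^ 2 + b ^ 2 := by
        rw [show 2 * n + 3 = 2 * (n + 1) + 1 from by ring, fibq_two_mul_add_one, hab]
      have h4n : (Nat.fib (4 * n) : ℚ)
          = a * (2 * b - a) * (2 * (b ^ 2 + a ^ 2) - a * (2 * b - a)) := by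
        rw [show 4 * n = 2 * (2 * n) from by ring, fibq_two_mul, h2n,
          show 2 * n + 1 = 2 * n + 1 from rfl, h2n1]
      have h4n4 : (Nat.fib (4 * (n + 1)) : ℚ)
          = b * (2 * a + b) * (2 * ((a + b) ^ 2 + b ^ 2) - b * (2 * a + b)) := by
        rw [show 4 * (n + 1) = 2 * (2 * n + 2) from by ring, fibq_two_mul, h2n2,
          show 2 * n + 2 + 1 = 2 * n + 3 from rfl, h2n3]
      have hL : (lucas n : ℚ) = 2 * b - a := by rw [lucas_q]
      have hL1 : (lucas (n + 1) : ℚ) = 2 * (a + b) - b := by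
        rw [lucas_q, hab]
      have hc : ((-1 : ℚ)) ^ n = b ^ 2 - b * a - a ^ 2 := (cassini n).symm
      have h2 : ((-1 : ℚ) ^ n) ^ 2 = 1 := by
        rw [← pow_mul, mul_comm, pow_mul]; norm_num
      rw [show n + 1 - 1 = n from rfl, h4n, h4n4, hL, hL1]
      push_cast
      rw [pow_succ]
      linear_combination
        ((2 * (b * (2 * a + b) + a * (2 * b - a)) + (-1 : ℚ) ^ n
          + (b ^ 2 - b * a - a ^ 2)) / 25) * hc - (1 / 25) * h2
end

section
/- For every positive integer n, the smallest eigenvalue of the n×n real symmetric tridiagonal matrix B_n (with diagonal entries 2 except the last entry 1, off-diagonal entries −1) equals 4 cos²(nπ/(2n+1)), equivalently 4 sin²(π/(4n+2)). -/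
open Real

noncomputable def thN (n : ℕ) : ℝ := Real.pi / (2 * n + 1)
noncomputable def wN (n : ℕ) (k : ℕ) : ℝ := Real.sin (k * thN n)
noncomputable def vX (n : ℕ) (v : Fin n → ℝ) (k : ℕ) : ℝ :=
  if h : 1 ≤ k ∧ k ≤ n then v ⟨k - 1, by omega⟩
  else if h2 : k = n + 1 ∧ 1 ≤ n then v ⟨n - 1, by omega⟩ else 0

lemma thN_pos (n : ℕ) : 0 < thN n := by
  unfold thN; positivity

lemma wN_rec (n k : ℕ) : wN n k + wN n (k + 2) = 2 * Real.cos (thN n) * wN n (k + 1) := by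
  unfold wN
  have h1 : ((k : ℝ)) * thN n = (k + 1) * thN n - thN n := by ring
  have h2 : ((k : ℝ) + 2) * thN n = (k + 1) * thN n + thN n := by ring
  push_cast
  rw [h1, h2, Real.sin_add, Real.sin_sub]
  ring

lemma wN_pos (n k : ℕ) (hn : 0 < n) (h1 : 1 ≤ k) (h2 : k ≤ n) : 0 < wN n k := by
  unfold wN
  apply Real.sin_pos_of_pos_of_lt_pi
  · have := thN_pos n
    positivity
  · unfold thN
    rw [mul_div_assoc']
    rw [div_lt_iff₀ (by positivity)]
    have : (k : ℝ) ≤ n := by exact_mod_cast h2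
    nlinarith [Real.pi_pos]

lemma wN_top (n : ℕ) : wN n (n + 1) = wN n n := by
  unfold wN
  have : ((n : ℝ) + 1) * thN n = Real.pi - n * thN n := by
    unfold thN; field_simp; ring
  push_cast
  rw [this, Real.sin_pi_sub]
lemma sum_if_val {n : ℕ} (c : ℕ) (f : Fin n → ℝ) :
    (∑ j : Fin n, if (j : ℕ) = c then f j else 0) = if h : c < n then f ⟨c, h⟩ else 0 := by
  split_ifs with h
  · rw [show (fun j : Fin n => if (j : ℕ) = c then f j else 0)
        = fun j => if j = ⟨c, h⟩ then f j else 0 from funext fun j => by simp [Fin.ext_iff]]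
    simp
  · apply Finset.sum_eq_zero
    intro j _
    rw [if_neg]
    exact fun hc => h (hc ▸ j.2)

lemma mulVec_eq {n : ℕ} (hn : 0 < n) (v : Fin n → ℝ) (k : Fin n) :
    (Matrix.of fun i j : Fin n =>
      if i = j then (if i.1 = n - 1 then (1 : ℝ) else 2)
      else if i.1 + 1 = j.1 ∨ j.1 + 1 = i.1 then -1 else 0).mulVec v k
    = 2 * vX n v (k + 1) - vX n v k - vX n v ((k : ℕ) + 2) := by
  have hsum : ∀ j : Fin n, (if k = j then (if (k:ℕ) = n - 1 then (1 : ℝ) else 2)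
      else if (k:ℕ) + 1 = (j:ℕ) ∨ (j:ℕ) + 1 = (k:ℕ) then -1 else 0) * v j
      = (if (j:ℕ) = (k:ℕ) then (if (k:ℕ) = n - 1 then (1 : ℝ) else 2) * v j else 0)
        + ((if (j:ℕ) = (k:ℕ) + 1 then -v j else 0)
        + (if (j:ℕ) = (k:ℕ) - 1 ∧ 1 ≤ (k:ℕ) then -v j else 0)) := by
    intro j
    rcases eq_or_ne k j with rfl | hkj
    · rw [if_pos rfl, if_pos rfl, if_neg (show ¬((k:ℕ) = (k:ℕ) + 1) by omega),
        if_neg (show ¬((k:ℕ) = (k:ℕ) - 1 ∧ 1 ≤ (k:ℕ)) by omega)]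
      ring
    · have hv : ¬((j:ℕ) = (k:ℕ)) := fun h => hkj (Fin.ext h.symm)
      simp only [if_neg hkj, if_neg hv]
      by_cases h1 : (j:ℕ) = (k:ℕ) + 1
      · simp only [if_pos h1, if_pos (Or.inl h1.symm : (k:ℕ)+1 = (j:ℕ) ∨ (j:ℕ)+1 = (k:ℕ)),
          if_neg (show ¬((j:ℕ) = (k:ℕ) - 1 ∧ 1 ≤ (k:ℕ)) by omega)]
        ring
      · by_cases h2 : (j:ℕ) + 1 = (k:ℕ)
        · simp only [if_pos (Or.inr h2 : (k:ℕ)+1 = (j:ℕ) ∨ (j:ℕ)+1 = (k:ℕ)), if_neg h1,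
            if_pos (show (j:ℕ) = (k:ℕ) - 1 ∧ 1 ≤ (k:ℕ) by omega)]
          ring
        · simp only [if_neg (show ¬((k:ℕ)+1 = (j:ℕ) ∨ (j:ℕ)+1 = (k:ℕ)) by omega), if_neg h1,
            if_neg (show ¬((j:ℕ) = (k:ℕ) - 1 ∧ 1 ≤ (k:ℕ)) by omega)]
          ring
  simp only [Matrix.mulVec, dotProduct, Matrix.of_apply]
  rw [Finset.sum_congr rfl (fun j _ => hsum j), Finset.sum_add_distrib, Finset.sum_add_distrib,
    sum_if_val, sum_if_val]
  have h3 : (∑ j : Fin n, if (j:ℕ) = (k:ℕ) - 1 ∧ 1 ≤ (k:ℕ) then -v j else 0)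
      = if h : 1 ≤ (k:ℕ) then -v ⟨(k:ℕ) - 1, by omega⟩ else 0 := by
    split_ifs with h
    · have hk2 := k.2
      simp only [h, and_true]
      rw [sum_if_val, dif_pos (show (k:ℕ) - 1 < n by omega)]
    · apply Finset.sum_eq_zero; intro j _; rw [if_neg (by omega)]
  rw [h3]
  have hk := k.2
  unfold vX
  split_ifs <;> (try omega) <;>
    (try simp only [Fin.eta, show (k:ℕ)+1-1 = (k:ℕ) from rfl, show (k:ℕ)+2-1 = (k:ℕ)+1 from rfl]) <;>
    (try ring) <;>
    (rw [show ((⟨n-1, by omega⟩ : Fin n)) = k from by apply Fin.ext; simp only []; omega]; ring)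

lemma vX_zero {n : ℕ} (v : Fin n → ℝ) : vX n v 0 = 0 := by
  unfold vX
  rw [dif_neg (by omega), dif_neg (by omega)]

lemma vX_mid {n : ℕ} (v : Fin n → ℝ) (k : ℕ) (h1 : 1 ≤ k) (h2 : k ≤ n) :
    vX n v k = v ⟨k - 1, by omega⟩ := by
  unfold vX
  rw [dif_pos ⟨h1, h2⟩]

lemma vX_top {n : ℕ} (hn : 0 < n) (v : Fin n → ℝ) : vX n v (n + 1) = vX n v n := by
  rw [vX_mid v n hn le_rfl]
  unfold vX
  rw [dif_neg (by omega), dif_pos ⟨rfl, hn⟩]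

lemma vX_fin {n : ℕ} (v : Fin n → ℝ) (k : Fin n) : vX n v ((k : ℕ) + 1) = v k := by
  rw [vX_mid v ((k : ℕ) + 1) (by omega) (by omega)]
  simp [Fin.eta]

lemma wN_zero (n : ℕ) : wN n 0 = 0 := by simp [wN]

lemma vX_w {n : ℕ} (hn : 0 < n) (k : ℕ) (hk : k ≤ n + 1) :
    vX n (fun i : Fin n => wN n ((i : ℕ) + 1)) k = wN n k := by
  rcases Nat.eq_zero_or_pos k with rfl | h1
  · rw [vX_zero, wN_zero]
  rcases Nat.lt_or_ge k (n + 1) with h2 | h2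
  · rw [vX_mid _ k h1 (by omega)]
    simp only []
    congr 1
    omega
  · have hk1 : k = n + 1 := by omega
    subst hk1
    rw [vX_top hn, vX_mid _ n hn le_rfl, wN_top]
    simp only []
    congr 1
    omega

/-- The positive eigenvector gives membership. -/
lemma mem_spec {n : ℕ} (hn : 0 < n) :
    ∃ v : Fin n → ℝ, v ≠ 0 ∧
      (Matrix.of fun i j : Fin n =>
        if i = j then (if i.1 = n - 1 then (1 : ℝ) else 2)
        else if i.1 + 1 = j.1 ∨ j.1 + 1 = i.1 then -1 else 0).mulVec v
      = (2 - 2 * Real.cos (thN n)) • v := by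
  refine ⟨fun i : Fin n => wN n ((i : ℕ) + 1), ?_, ?_⟩
  · intro h
    have h0 : wN n ((⟨0, hn⟩ : Fin n) + 1 : ℕ) = 0 := congrFun h ⟨0, hn⟩
    have : 0 < wN n 1 := wN_pos n 1 hn le_rfl hn
    simp only [Fin.val_mk] at h0
    linarith
  · funext k
    rw [mulVec_eq hn]
    rw [vX_w hn ((k : ℕ) + 1) (by omega), vX_w hn (k : ℕ) (by omega),
      vX_w hn ((k : ℕ) + 2) (by omega)]
    have hrec := wN_rec n (k : ℕ)
    simp only [Pi.smul_apply, smul_eq_mul]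
    linarith

lemma wN_pos' {n : ℕ} (hn : 0 < n) (k : ℕ) (h1 : 1 ≤ k) (h2 : k ≤ n + 1) : 0 < wN n k := by
  rcases Nat.lt_or_ge k (n + 1) with h | h
  · exact wN_pos n k hn h1 (by omega)
  · have : k = n + 1 := by omega
    subst this
    rw [wN_top]
    exact wN_pos n n hn hn le_rfl

lemma lower_bound {n : ℕ} (hn : 0 < n) (μ : ℝ) (v : Fin n → ℝ) (hv : v ≠ 0)
    (heig : (Matrix.of fun i j : Fin n =>
        if i = j then (if i.1 = n - 1 then (1 : ℝ) else 2)
        else if i.1 + 1 = j.1 ∨ j.1 + 1 = i.1 then -1 else 0).mulVec v = μ • v) :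
    2 - 2 * Real.cos (thN n) ≤ μ := by
  set lam : ℝ := 2 - 2 * Real.cos (thN n) with hlam
  set W : ℕ → ℝ := wN n with hW
  set V : ℕ → ℝ := vX n v with hV
  have hrow : ∀ k : ℕ, k < n → 2 * V (k + 1) - V k - V (k + 2) = μ * V (k + 1) := by
    intro k hk
    have h1 := congrFun heig ⟨k, hk⟩
    rw [mulVec_eq hn] at h1
    simp only [Pi.smul_apply, smul_eq_mul, Fin.val_mk] at h1
    rw [hV, h1, ← vX_fin v ⟨k, hk⟩]
  -- positivity of weights
  have hWpos1 : ∀ k : ℕ, k < n → 0 < W (k + 1) := fun k hk => wN_pos' hn (k+1) (by omega) (by omega)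
  have hWpos2 : ∀ k : ℕ, k < n → 0 < W (k + 2) := fun k hk => wN_pos' hn (k+2) (by omega) (by omega)
  -- telescoping function
  set g : ℕ → ℝ := fun k => -(W k / W (k + 1)) * V (k + 1) ^ 2 + V k * V (k + 1) with hg
  -- per-term identity
  have hterm : ∀ k : ℕ, k < n →
      (W (k + 2) * V (k + 1) - W (k + 1) * V (k + 2)) ^ 2 / (W (k + 1) * W (k + 2))
        - (2 * V (k + 1) - V k - V (k + 2) - lam * V (k + 1)) * V (k + 1)
      = g k - g (k + 1) := by
    intro k hk
    have h1 := hWpos1 k hk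
    have h2 := hWpos2 k hk
    have hrec : W k = 2 * Real.cos (thN n) * W (k + 1) - W (k + 2) := by
      have := wN_rec n k
      rw [← hW] at this
      linarith
    simp only [hg, hlam]
    rw [hrec]
    field_simp
    ring
  -- sum the telescope
  have hsum : (∑ k ∈ Finset.range n,
        (W (k + 2) * V (k + 1) - W (k + 1) * V (k + 2)) ^ 2 / (W (k + 1) * W (k + 2)))
      - (∑ k ∈ Finset.range n,
        (2 * V (k + 1) - V k - V (k + 2) - lam * V (k + 1)) * V (k + 1))
      = g 0 - g n := by
    rw [← Finset.sum_sub_distrib, ← Finset.sum_range_sub' g n]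
    exact Finset.sum_congr rfl fun k hk => hterm k (Finset.mem_range.mp hk)
  have hg0 : g 0 = 0 := by
    simp only [hg, hV, hW, vX_zero, wN_zero]
    ring_nf
  have hgn : g n = 0 := by
    have hWn : W (n + 1) = W n := wN_top n
    have hVn : V (n + 1) = V n := vX_top hn v
    have hWnpos : 0 < W n := wN_pos n n hn hn le_rfl
    simp only [hg, hWn, hVn, div_self (ne_of_gt hWnpos)]
    ring
  -- rewrite the S-sum using the eigen-equation
  have hS : (∑ k ∈ Finset.range n,
        (2 * V (k + 1) - V k - V (k + 2) - lam * V (k + 1)) * V (k + 1))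
      = (μ - lam) * ∑ k ∈ Finset.range n, V (k + 1) ^ 2 := by
    rw [Finset.mul_sum]
    refine Finset.sum_congr rfl fun k hk => ?_
    rw [hrow k (Finset.mem_range.mp hk)]
    ring
  have hTnonneg : 0 ≤ ∑ k ∈ Finset.range n,
      (W (k + 2) * V (k + 1) - W (k + 1) * V (k + 2)) ^ 2 / (W (k + 1) * W (k + 2)) := by
    apply Finset.sum_nonneg
    intro k hk
    have h1 := hWpos1 k (Finset.mem_range.mp hk)
    have h2 := hWpos2 k (Finset.mem_range.mp hk)
    positivity
  have hVpos : 0 < ∑ k ∈ Finset.range n, V (k + 1) ^ 2 := by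
    obtain ⟨i, hi⟩ : ∃ i : Fin n, v i ≠ 0 := by
      by_contra h
      push_neg at h
      exact hv (funext h)
    apply Finset.sum_pos'
    · intro k _; positivity
    · refine ⟨(i : ℕ), Finset.mem_range.mpr i.2, ?_⟩
      have : V ((i : ℕ) + 1) = v i := vX_fin v i
      rw [this]
      exact pow_two_pos_of_ne_zero hi
  have key : 0 ≤ (μ - lam) * ∑ k ∈ Finset.range n, V (k + 1) ^ 2 := by
    rw [← hS]
    have := hsum
    rw [hg0, hgn] at this
    linarith
  nlinarith [key, hVpos]

lemma lam_cos (n : ℕ) :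
    4 * Real.cos (n * Real.pi / (2 * n + 1)) ^ 2 = 2 - 2 * Real.cos (thN n) := by
  have h : (n : ℝ) * Real.pi / (2 * n + 1) = Real.pi / 2 - thN n / 2 := by
    unfold thN
    have : (0:ℝ) < 2 * n + 1 := by positivity
    field_simp
    ring
  rw [h, Real.cos_pi_div_two_sub]
  have h2 := Real.sin_sq_eq_half_sub (thN n / 2)
  have h3 : 2 * (thN n / 2) = thN n := by ring
  rw [h3] at h2
  linarith

lemma lam_sin (n : ℕ) :
    4 * Real.cos (n * Real.pi / (2 * n + 1)) ^ 2 = 4 * Real.sin (Real.pi / (4 * n + 2)) ^ 2 := by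
  have h : (n : ℝ) * Real.pi / (2 * n + 1) = Real.pi / 2 - Real.pi / (4 * n + 2) := by
    have : (0:ℝ) < 2 * n + 1 := by positivity
    have : (0:ℝ) < 4 * n + 2 := by positivity
    field_simp
    ring
  rw [h, Real.cos_pi_div_two_sub]

open Real in
theorem smallest_eigenvalue_Bn (n : ℕ) (hn : 0 < n) :
    IsLeast
      {μ : ℝ | ∃ v : Fin n → ℝ, v ≠ 0 ∧
        (Matrix.of fun i j : Fin n =>
          if i = j then (if i.1 = n - 1 then (1 : ℝ) else 2)
          else if i.1 + 1 = j.1 ∨ j.1 + 1 = i.1 then -1 else 0).mulVec v = μ • v}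
      (4 * Real.cos (n * π / (2 * n + 1)) ^ 2) ∧
    4 * Real.cos (n * π / (2 * n + 1)) ^ 2 = 4 * Real.sin (π / (4 * n + 2)) ^ 2 := by
  refine ⟨⟨?_, ?_⟩, lam_sin n⟩
  · obtain ⟨v, hv, hev⟩ := mem_spec hn
    exact ⟨v, hv, by rw [lam_cos n]; exact hev⟩
  · rintro μ ⟨v, hv, hev⟩
    rw [lam_cos n]
    exact lower_bound hn μ v hv hev
end

section
/- For every positive integer n, the largest eigenvalue of the n×n matrix W_n with entries (W_n)_{i,j} = min{i,j} equals (1/4) csc²(π/(4n+2)). -/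
open Finset

private lemma filter_le_range (n m : ℕ) (h : m < n) :
    (Finset.range n).filter (fun k => k ≤ m) = Finset.range (m+1) := by
  ext k; simp only [mem_filter, mem_range]; omega

private lemma filter_ge_range (n k : ℕ) :
    (Finset.range n).filter (fun j => k ≤ j) = Finset.Ico k n := by
  ext j; simp only [mem_filter, mem_range, mem_Ico]; omega

private lemma tsum_min_sum (n i : ℕ) (hi : i < n) (f : ℕ → ℝ) :
    ∑ j ∈ range n, ((min (i+1) (j+1) : ℕ) : ℝ) * f j
      = ∑ k ∈ range (i+1), ∑ j ∈ Ico k n, f j := by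
  have h1 : ∀ j ∈ range n, ((min (i+1) (j+1) : ℕ) : ℝ) * f j
      = ∑ k ∈ range n, (if k ≤ i ∧ k ≤ j then f j else 0) := by
    intro j hj
    rw [mem_range] at hj
    have hfil : (range n).filter (fun k => k ≤ i ∧ k ≤ j) = range (min i j + 1) := by
      ext k; simp only [mem_filter, mem_range]; omega
    rw [← Finset.sum_filter, hfil, Finset.sum_const, card_range, nsmul_eq_mul]
    congr 1
    rw [Nat.cast_inj.mpr (show min (i+1) (j+1) = min i j + 1 by omega)]
  rw [Finset.sum_congr rfl h1, Finset.sum_comm]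
  have h2 : ∀ k ∈ range n, ∑ j ∈ range n, (if k ≤ i ∧ k ≤ j then f j else 0)
      = if k ≤ i then ∑ j ∈ Ico k n, f j else 0 := by
    intro k _
    by_cases hk' : k ≤ i
    · simp only [hk', true_and, if_true]
      rw [← filter_ge_range n k, Finset.sum_filter]
    · simp [hk']
  rw [Finset.sum_congr rfl h2, ← Finset.sum_filter, filter_le_range n i hi]

private lemma wirtinger (n : ℕ) (lam : ℝ) (w u : ℕ → ℝ)
    (hw0 : w 0 = 0) (hu0 : u 0 = 0)
    (hwpos : ∀ k, 1 ≤ k → k ≤ n → 0 < w k)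
    (hrec : ∀ k : ℕ, (2 - lam) * w (k+1) = w k + w (k+2))
    (hwn : w (n+1) = w n) :
    lam * ∑ k ∈ range n, u (k+1) ^ 2 ≤ ∑ k ∈ range n, (u (k+1) - u k) ^ 2 := by
  set g : ℕ → ℝ := fun k => (w (k+1) - w k) / w k * u k ^ 2 with hg
  have hg0 : g 0 = 0 := by simp [hg, hu0]
  have hgn : g n = 0 := by simp [hg, hwn]
  have key : ∀ k ∈ range n, g (k+1) - g k ≤ (u (k+1) - u k) ^ 2 - lam * u (k+1) ^ 2 := by
    intro k hk
    rw [mem_range] at hk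
    rcases Nat.eq_zero_or_pos k with rfl | hkpos
    · have hw1 : 0 < w 1 := hwpos 1 le_rfl hk
      show (w 2 - w 1) / w 1 * u 1 ^ 2 - (w 1 - w 0) / w 0 * u 0 ^ 2
          ≤ (u 1 - u 0) ^ 2 - lam * u 1 ^ 2
      rw [hu0, hw0]
      have hz : (w 1 - 0) / 0 * (0:ℝ) ^ 2 = 0 := by ring
      rw [hz, sub_zero, div_mul_eq_mul_div, div_le_iff₀ hw1]
      have h0 := hrec 0
      rw [hw0] at h0
      nlinarith [sq_nonneg (u 1)]
    · obtain ⟨m, rfl⟩ : ∃ m, k = m + 1 := ⟨k - 1, by omega⟩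
      have ha : 0 < w (m+1) := hwpos (m+1) (by omega) (by omega)
      have hb : 0 < w (m+2) := hwpos (m+2) (by omega) (by omega)
      show (w (m+3) - w (m+2)) / w (m+2) * u (m+2) ^ 2
            - (w (m+2) - w (m+1)) / w (m+1) * u (m+1) ^ 2
          ≤ (u (m+2) - u (m+1)) ^ 2 - lam * u (m+2) ^ 2
      rw [div_mul_eq_mul_div, div_mul_eq_mul_div, div_sub_div _ _ hb.ne' ha.ne',
        div_le_iff₀ (mul_pos hb ha)]
      have he : ((u (m+2) - u (m+1)) ^ 2 - lam * u (m+2) ^ 2) * (w (m+2) * w (m+1))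
          - ((w (m+3) - w (m+2)) * u (m+2) ^ 2 * w (m+1)
              - (w (m+2) - w (m+1)) * u (m+1) ^ 2 * w (m+2))
          = (w (m+1) * u (m+2) - w (m+2) * u (m+1)) ^ 2 := by
        linear_combination (w (m+1) * u (m+2) ^ 2) * hrec (m+1)
      nlinarith [sq_nonneg (w (m+1) * u (m+2) - w (m+2) * u (m+1))]
  have hsum := Finset.sum_le_sum key
  rw [Finset.sum_range_sub g n, hg0, hgn, Finset.sum_sub_distrib] at hsum
  have hms : ∑ k ∈ range n, lam * u (k+1) ^ 2 = lam * ∑ k ∈ range n, u (k+1) ^ 2 := by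
    rw [Finset.mul_sum]
  linarith [hsum, hms]

private lemma trig_rec (θ : ℝ) (k : ℕ) :
    (2 - 4 * Real.sin θ ^ 2) * Real.sin (2*(k+1)*θ)
      = Real.sin (2*k*θ) + Real.sin (2*(k+2)*θ) := by
  have hc2 : Real.cos (2*θ) = 1 - 2 * Real.sin θ ^ 2 := by
    have h1 := Real.cos_two_mul θ
    have h2 := Real.sin_sq_add_cos_sq θ
    nlinarith
  have e1 : 2*((k:ℝ)+2)*θ = 2*((k:ℝ)+1)*θ + 2*θ := by ring
  have e2 : 2*(k:ℝ)*θ = 2*((k:ℝ)+1)*θ - 2*θ := by ring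
  rw [e1, e2, Real.sin_add, Real.sin_sub, hc2]
  ring

open Real in
theorem largest_eigenvalue_min_matrix (n : ℕ) (hn : 0 < n) :
    IsGreatest
      {μ : ℝ | ∃ v : Fin n → ℝ, v ≠ 0 ∧
        (Matrix.of fun i j : Fin n => (min (i.1 + 1) (j.1 + 1) : ℝ)).mulVec v = μ • v}
      ((1 / 4) * (1 / Real.sin (π / (4 * n + 2))) ^ 2) := by
  have hden : (0:ℝ) < 4*(n:ℝ)+2 := by positivity
  set θ : ℝ := π / (4 * n + 2) with hθdef
  have hθpos : 0 < θ := div_pos pi_pos hden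
  have hπ : (4*(n:ℝ)+2) * θ = π := by
    rw [hθdef]; field_simp
  have hθltpi : θ < π := by
    nlinarith [pi_pos, hθpos]
  have hs : 0 < Real.sin θ := Real.sin_pos_of_pos_of_lt_pi hθpos hθltpi
  set w : ℕ → ℝ := fun k => Real.sin (2*k*θ) with hw
  set lam : ℝ := 4 * Real.sin θ ^ 2 with hlam
  have hlampos : 0 < lam := by positivity
  have hw0 : w 0 = 0 := by simp [hw]
  have hrec : ∀ k : ℕ, (2 - lam) * w (k+1) = w k + w (k+2) := by
    intro k
    have := trig_rec θ k
    simp only [hw, hlam]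
    push_cast
    convert this using 3 <;> push_cast <;> ring
  have hwn : w (n+1) = w n := by
    have hx : 2*((n:ℝ)+1)*θ = π - 2*(n:ℝ)*θ := by rw [← hπ]; ring
    simp only [hw]
    push_cast
    rw [hx, Real.sin_pi_sub]
  have hwpos : ∀ k, 1 ≤ k → k ≤ n → 0 < w k := by
    intro k h1 h2
    have hkr : (k:ℝ) ≤ n := Nat.cast_le.mpr h2
    have hk1 : (1:ℝ) ≤ k := by exact_mod_cast h1
    apply Real.sin_pos_of_pos_of_lt_pi
    · positivity
    · nlinarith [hπ, hθpos]
  have hcosn : Real.cos ((2*(n:ℝ)+1)*θ) = 0 := by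
    have : (2*(n:ℝ)+1)*θ = π/2 := by
      rw [hθdef]; field_simp; ring
    rw [this, Real.cos_pi_div_two]
  -- telescoping sums
  have hIco : ∀ k : ℕ, k ≤ n → (2*Real.sin θ) * ∑ j ∈ Ico k n, w (j+1)
      = Real.cos ((2*(k:ℝ)+1)*θ) := by
    intro k hk
    set c : ℕ → ℝ := fun j => Real.cos ((2*(j:ℝ)+1)*θ) with hc
    have hterm : ∀ j : ℕ, 2*Real.sin θ * w (j+1) = c j - c (j+1) := by
      intro j
      simp only [hw, hc]
      have e1 : (2*(j:ℝ)+1)*θ = 2*((j:ℝ)+1)*θ - θ := by ring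
      have e2 : (2*((j:ℝ)+1)+1)*θ = 2*((j:ℝ)+1)*θ + θ := by ring
      push_cast
      rw [e1, e2, Real.cos_sub, Real.cos_add]
      ring
    rw [Finset.mul_sum]
    rw [Finset.sum_congr rfl (fun j _ => hterm j)]
    rw [Finset.sum_Ico_eq_sub _ hk, Finset.sum_range_sub' c, Finset.sum_range_sub' c]
    have hcn : c n = 0 := hcosn
    rw [hcn]; ring
  have hCos : ∀ m : ℕ, (2*Real.sin θ) * ∑ k ∈ range m, Real.cos ((2*(k:ℝ)+1)*θ)
      = w m := by
    intro m
    have hterm : ∀ k : ℕ, 2*Real.sin θ * Real.cos ((2*(k:ℝ)+1)*θ) = w (k+1) - w k := by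
      intro k
      simp only [hw]
      have e1 : 2*((k:ℝ)+1)*θ = (2*(k:ℝ)+1)*θ + θ := by ring
      have e2 : 2*(k:ℝ)*θ = (2*(k:ℝ)+1)*θ - θ := by ring
      push_cast
      rw [e1, e2, Real.sin_add, Real.sin_sub]
      ring
    rw [Finset.mul_sum, Finset.sum_congr rfl (fun k _ => hterm k),
      Finset.sum_range_sub w m, hw0, sub_zero]
  constructor
  · -- membership
    refine ⟨fun j => w (j.1+1), ?_, ?_⟩
    · intro hcontra
      have h0 := congrFun hcontra ⟨0, hn⟩
      simp only [Pi.zero_apply] at h0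
      exact absurd h0 (ne_of_gt (hwpos 1 le_rfl hn))
    · funext i
      have hmv : (Matrix.of fun i j : Fin n => (min ((i.1:ℝ) + 1) ((j.1:ℝ) + 1))).mulVec
            (fun j : Fin n => w (j.1+1)) i
          = ∑ j : Fin n, ((min (i.1+1) (j.1+1) : ℕ) : ℝ) * w (j.1+1) := by
        simp only [Matrix.mulVec, dotProduct, Matrix.of_apply]
        refine Finset.sum_congr rfl fun j _ => ?_
        congr 1
        push_cast
        rfl
      rw [hmv] -- might fail to match statement coercion shape
      rw [Fin.sum_univ_eq_sum_range (fun jj => ((min (i.1+1) (jj+1) : ℕ) : ℝ) * w (jj+1)) n]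
      rw [tsum_min_sum n i.1 i.2]
      have h2s : (2*Real.sin θ) ≠ 0 := by positivity
      have hinner : ∀ k ∈ range (i.1+1), ∑ j ∈ Ico k n, w (j+1)
          = Real.cos ((2*(k:ℝ)+1)*θ) / (2*Real.sin θ) := by
        intro k hk
        rw [mem_range] at hk
        rw [eq_div_iff h2s, mul_comm]
        exact hIco k (by omega)
      rw [Finset.sum_congr rfl hinner, ← Finset.sum_div]
      have hcsum : ∑ k ∈ range (i.1+1), Real.cos ((2*(k:ℝ)+1)*θ)
          = w (i.1+1) / (2*Real.sin θ) := by
        rw [eq_div_iff h2s, mul_comm]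
        exact hCos (i.1+1)
      rw [hcsum]
      simp only [Pi.smul_apply, smul_eq_mul]
      rw [div_div]
      have key : w (i.1+1) / (2*Real.sin θ * (2*Real.sin θ))
          = 1/4 * (1/Real.sin θ)^2 * w (i.1+1) := by
        rw [div_eq_iff (by positivity : (2*Real.sin θ * (2*Real.sin θ)) ≠ 0)]
        have hss : Real.sin θ ≠ 0 := hs.ne'
        field_simp
        ring
      rw [key]
  · rintro mu ⟨v, hv, heig⟩
    set vv : ℕ → ℝ := fun j => if h : j < n then v ⟨j, h⟩ else 0 with hvv
    have hvv' : ∀ j : Fin n, vv j.1 = v j := by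
      intro j; simp only [hvv, j.2, dif_pos]
    set u : ℕ → ℝ := fun k => ∑ j ∈ Ico (n-k) n, vv j with hu
    have hu0 : u 0 = 0 := by simp [hu]
    have hustep : ∀ k, k < n → u (k+1) = vv (n-1-k) + u k := by
      intro k hk
      simp only [hu]
      rw [show n - (k+1) = n-1-k by omega, show n - k = n-1-k+1 by omega,
        Finset.sum_eq_sum_Ico_succ_bot (show n-1-k < n by omega)]
    -- the eigen equation, componentwise with natural min and range sums
    have hcomp : ∀ i : Fin n,
        ∑ k ∈ range (i.1+1), ∑ j ∈ Ico k n, vv j = mu * vv i.1 := by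
      intro i
      have h1 := congrFun heig i
      have h2 : (Matrix.of fun i j : Fin n => (min ((i.1:ℝ) + 1) ((j.1:ℝ) + 1))).mulVec v i
          = ∑ j : Fin n, ((min (i.1+1) (j.1+1) : ℕ) : ℝ) * v j := by
        simp only [Matrix.mulVec, dotProduct, Matrix.of_apply]
        refine Finset.sum_congr rfl fun j _ => ?_
        congr 1
        push_cast
        rfl
      rw [h2] at h1
      rw [← tsum_min_sum n i.1 i.2 vv]
      rw [show (∑ j : Fin n, ((min (i.1+1) (j.1+1) : ℕ) : ℝ) * v j)
          = ∑ j : Fin n, ((min (i.1+1) (j.1+1) : ℕ) : ℝ) * vv j.1 from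
        Finset.sum_congr rfl fun j _ => by rw [hvv' j]] at h1
      rw [Fin.sum_univ_eq_sum_range (fun jj => ((min (i.1+1) (jj+1) : ℕ) : ℝ) * vv jj) n] at h1
      rw [h1, Pi.smul_apply, smul_eq_mul, hvv' i]
    -- sum the squares
    have hQ : ∑ i ∈ range n, (∑ k ∈ range (i+1), ∑ j ∈ Ico k n, vv j) * vv i
        = ∑ k ∈ range n, (∑ j ∈ Ico k n, vv j) ^ 2 := by
      have e1 : ∀ i ∈ range n, (∑ k ∈ range (i+1), ∑ j ∈ Ico k n, vv j) * vv i
          = ∑ k ∈ range n, (if k ≤ i then (∑ j ∈ Ico k n, vv j) * vv i else 0) := by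
        intro i hi
        rw [← Finset.sum_filter, filter_le_range n i (mem_range.mp hi), Finset.sum_mul]
      rw [Finset.sum_congr rfl e1, Finset.sum_comm]
      refine Finset.sum_congr rfl fun k _ => ?_
      rw [← Finset.sum_filter, filter_ge_range, ← Finset.mul_sum, sq]
    have hQ2 : ∑ i ∈ range n, (∑ k ∈ range (i+1), ∑ j ∈ Ico k n, vv j) * vv i
        = mu * ∑ i ∈ range n, vv i ^ 2 := by
      rw [Finset.mul_sum]
      refine Finset.sum_congr rfl fun i hi => ?_
      rw [mem_range] at hi
      have := hcomp ⟨i, hi⟩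
      rw [this]
      ring
    -- reindex
    have hA : ∑ k ∈ range n, (∑ j ∈ Ico k n, vv j) ^ 2 = ∑ k ∈ range n, u (k+1) ^ 2 := by
      rw [← Finset.sum_range_reflect (fun k => u (k+1) ^ 2) n]
      refine Finset.sum_congr rfl fun k hk => ?_
      rw [mem_range] at hk
      simp only [hu]
      rw [show n - 1 - k + 1 = n - k by omega, show n - (n - k) = k by omega]
    have hB : ∑ i ∈ range n, vv i ^ 2 = ∑ k ∈ range n, (u (k+1) - u k) ^ 2 := by
      rw [← Finset.sum_range_reflect (fun i => vv i ^ 2) n]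
      refine Finset.sum_congr rfl fun k hk => ?_
      rw [mem_range] at hk
      rw [hustep k hk]
      ring
    -- positivity of the norm
    have hpos : 0 < ∑ i ∈ range n, vv i ^ 2 := by
      obtain ⟨i0, hi0⟩ := Function.ne_iff.mp hv
      refine Finset.sum_pos' (fun i _ => sq_nonneg _) ⟨i0.1, mem_range.mpr i0.2, ?_⟩
      rw [hvv' i0]
      have : v i0 ≠ 0 := by simpa using hi0
      positivity
    -- wirtinger
    have hwir := wirtinger n lam w u hw0 hu0 hwpos hrec hwn
    -- combine
    have hQu : mu * ∑ i ∈ range n, vv i ^ 2 = ∑ k ∈ range n, u (k+1) ^ 2 := by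
      rw [← hQ2, hQ, hA]
    have hfin : lam * mu ≤ 1 := by
      have h5 : lam * (mu * ∑ i ∈ range n, vv i ^ 2) ≤ ∑ i ∈ range n, vv i ^ 2 := by
        rw [hQu, hB]
        exact hwir
      nlinarith [hpos]
    have : mu ≤ 1 / lam := by
      rw [le_div_iff₀ hlampos]
      linarith
    calc mu ≤ 1 / lam := this
      _ = 1/4 * (1 / Real.sin θ) ^ 2 := by
          rw [hlam]
          field_simp
end

section
/- For every positive integer n and every real λ, the characteristic polynomial det(B_n − λI) equals U_n(1 − λ/2) − U_{n−1}(1 − λ/2), where U_k is the k-th Chebyshev polynomial of the second kind. -/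
open Polynomial Chebyshev

noncomputable def Mmat (lam : ℝ) (k : ℕ) : Matrix (Fin k) (Fin k) ℝ :=
  (Matrix.of fun i j : Fin k =>
      if i = j then (if i.1 = k - 1 then (1 : ℝ) else 2)
      else if i.1 + 1 = j.1 ∨ j.1 + 1 = i.1 then -1 else 0)
    - lam • (1 : Matrix (Fin k) (Fin k) ℝ)

lemma Mmat_apply (lam : ℝ) (k : ℕ) (i j : Fin k) :
    Mmat lam k i j =
      if i = j then (if i.1 = k - 1 then (1 : ℝ) else 2) - lam
      else if i.1 + 1 = j.1 ∨ j.1 + 1 = i.1 then -1 else 0 := by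
  simp only [Mmat, Matrix.sub_apply, Matrix.smul_apply, Matrix.one_apply, Matrix.of_apply]
  split_ifs <;> simp [smul_eq_mul]

noncomputable def g (lam : ℝ) (k : ℕ) : ℝ :=
  (Polynomial.Chebyshev.U ℝ (k : ℤ)).eval (1 - lam / 2)
    - (Polynomial.Chebyshev.U ℝ ((k : ℤ) - 1)).eval (1 - lam / 2)

lemma g_one (lam : ℝ) : g lam 1 = 1 - lam := by
  simp [g, Polynomial.Chebyshev.U_one, Polynomial.Chebyshev.U_zero]
  ring

lemma g_two (lam : ℝ) : g lam 2 = (2 - lam) * (1 - lam) - 1 := by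
  have h2 : ((2 : ℕ) : ℤ) = 2 := by norm_num
  simp [g, h2, Polynomial.Chebyshev.U_two, Polynomial.Chebyshev.U_one]
  ring

lemma g_rec (lam : ℝ) (k : ℕ) : g lam (k + 2) = (2 - lam) * g lam (k + 1) - g lam k := by
  have h1 : ((k + 2 : ℕ) : ℤ) = (k : ℤ) + 2 := by push_cast; ring
  have h2 : ((k : ℤ) + 2) - 1 = ((k : ℤ) - 1) + 2 := by ring
  have h3 : ((k + 1 : ℕ) : ℤ) = (k : ℤ) + 1 := by push_cast; ring
  have h4 : ((k : ℤ) + 1) - 1 = (k : ℤ) := by ring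
  have e1 := Polynomial.Chebyshev.U_add_two ℝ (k : ℤ)
  have e2 := Polynomial.Chebyshev.U_add_two ℝ ((k : ℤ) - 1)
  have h5 : ((k : ℤ) - 1) + 1 = (k : ℤ) := by ring
  rw [g, g, g, h1, h2, h3, h4, e1, e2, h5]
  simp only [Polynomial.eval_sub, Polynomial.eval_mul, Polynomial.eval_ofNat, Polynomial.eval_X]
  ring

lemma succAbove_one_zero {n : ℕ} : (1 : Fin (n+2)).succAbove 0 = 0 := by
  simp [Fin.succAbove, Fin.lt_def]

lemma succAbove_one_succ {n : ℕ} (j : Fin n) :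
    (1 : Fin (n+2)).succAbove j.succ = j.succ.succ := by
  simp [Fin.succAbove, Fin.lt_def]

lemma sub1 (lam : ℝ) (n : ℕ) :
    (Mmat lam (n+2)).submatrix Fin.succ Fin.succ = Mmat lam (n+1) := by
  ext i j
  simp only [Matrix.submatrix_apply, Mmat_apply, Fin.val_succ, Fin.succ_inj]
  split_ifs <;> first | rfl | omega

lemma sub2 (lam : ℝ) (n : ℕ) :
    (Mmat lam (n+2)).submatrix (fun i : Fin n => i.succ.succ) (fun j : Fin n => j.succ.succ)
      = Mmat lam n := by
  ext i j
  have hij : (i.succ.succ = j.succ.succ) ↔ (i = j) := by simp [Fin.succ_inj]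
  simp only [Matrix.submatrix_apply, Mmat_apply, Fin.val_succ, hij]
  split_ifs <;> first | rfl | omega

lemma entry00 (lam : ℝ) (n : ℕ) : Mmat lam (n+2) 0 0 = 2 - lam := by
  rw [Mmat_apply]
  simp

lemma entry01 (lam : ℝ) (n : ℕ) : Mmat lam (n+2) 0 1 = -1 := by
  rw [Mmat_apply]
  have h1 : ((1 : Fin (n+2)) : ℕ) = 1 := rfl
  have h0 : (0 : Fin (n+2)) ≠ 1 := by simp [Fin.ext_iff]
  simp [h0, h1]

lemma entry10 (lam : ℝ) (n : ℕ) : Mmat lam (n+2) 1 0 = -1 := by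
  rw [Mmat_apply]
  have h0 : (1 : Fin (n+2)) ≠ 0 := by simp [Fin.ext_iff]
  simp [h0]

lemma entry0ss (lam : ℝ) (n : ℕ) (j : Fin n) : Mmat lam (n+2) 0 j.succ.succ = 0 := by
  rw [Mmat_apply]
  have h0 : (0 : Fin (n+2)) ≠ j.succ.succ := by simp [Fin.ext_iff]
  have : ¬((0 : Fin (n+2)).1 + 1 = (j.succ.succ).1 ∨ (j.succ.succ).1 + 1 = (0 : Fin (n+2)).1) := by
    simp [Fin.ext_iff]
  simp [h0, this]

lemma entryss0 (lam : ℝ) (n : ℕ) (j : Fin n) : Mmat lam (n+2) j.succ.succ 0 = 0 := by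
  rw [Mmat_apply]
  have h0 : (j.succ.succ : Fin (n+2)) ≠ 0 := by simp [Fin.ext_iff]
  have : ¬((j.succ.succ).1 + 1 = (0 : Fin (n+2)).1 ∨ (0 : Fin (n+2)).1 + 1 = (j.succ.succ).1) := by
    simp [Fin.ext_iff]
  simp [h0, this]

lemma det_rec (lam : ℝ) (n : ℕ) :
    (Mmat lam (n+2)).det = (2 - lam) * (Mmat lam (n+1)).det - (Mmat lam n).det := by
  rw [Matrix.det_succ_row_zero, Fin.sum_univ_succ, Fin.sum_univ_succ]
  have hz : ∀ j : Fin n, ((-1:ℝ))^((j.succ.succ : Fin (n+2)) : ℕ) * Mmat lam (n+2) 0 j.succ.succ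
      * ((Mmat lam (n+2)).submatrix Fin.succ (j.succ.succ).succAbove).det = 0 := by
    intro j; rw [entry0ss]; ring
  rw [Finset.sum_congr rfl (fun j _ => hz j), Finset.sum_const, smul_zero]
  rw [show Fin.succ (0 : Fin (n+1)) = (1 : Fin (n+2)) from rfl]
  rw [entry00, entry01, Fin.succAbove_zero, sub1]
  -- second minor
  set N := (Mmat lam (n+2)).submatrix Fin.succ (1 : Fin (n+2)).succAbove with hN
  have hNdet : N.det = -(Mmat lam n).det := by
    rw [Matrix.det_succ_column_zero, Fin.sum_univ_succ]
    have hN00 : N 0 0 = -1 := by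
      rw [hN]
      simp only [Matrix.submatrix_apply]
      rw [show (1 : Fin (n+2)).succAbove 0 = 0 from succAbove_one_zero]
      exact entry10 lam n
    have htail : ∀ i : Fin n, ((-1:ℝ))^((i.succ : Fin (n+1)) : ℕ) * N i.succ 0
        * (N.submatrix (i.succ).succAbove Fin.succ).det = 0 := by
      intro i
      have : N i.succ 0 = 0 := by
        rw [hN]
        simp only [Matrix.submatrix_apply]
        rw [show (1 : Fin (n+2)).succAbove 0 = 0 from succAbove_one_zero]
        exact entryss0 lam n i
      rw [this]; ring
    rw [Finset.sum_congr rfl (fun i _ => htail i), Finset.sum_const, smul_zero, hN00]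
    have hmin : N.submatrix ((0:Fin (n+1)).succAbove) Fin.succ = Mmat lam n := by
      rw [← sub2 lam n, hN]
      ext i j
      simp only [Matrix.submatrix_apply, Fin.succAbove_zero, succAbove_one_succ]
    rw [hmin]
    simp
  rw [hNdet]
  simp
  ring

lemma detM (lam : ℝ) : ∀ m : ℕ,
    (Mmat lam (m+1)).det = g lam (m+1) ∧ (Mmat lam (m+2)).det = g lam (m+2) := by
  intro m
  induction m with
  | zero =>
    constructor
    · rw [Matrix.det_fin_one, g_one, Mmat_apply]
      norm_num
    · rw [Matrix.det_fin_two, g_two]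
      simp [Mmat_apply, Fin.ext_iff]
  | succ k ih =>
    refine ⟨ih.2, ?_⟩
    show (Mmat lam (k+3)).det = g lam (k+3)
    rw [show (Mmat lam (k+3)).det = (2-lam) * (Mmat lam (k+2)).det - (Mmat lam (k+1)).det from
        det_rec lam (k+1), ih.1, ih.2,
      show g lam (k+3) = (2-lam) * g lam (k+2) - g lam (k+1) from g_rec lam (k+1)]

theorem charpoly_Bn_chebyshev (n : ℕ) (hn : 0 < n) (lam : ℝ) :
    ((Matrix.of fun i j : Fin n =>
        if i = j then (if i.1 = n - 1 then (1 : ℝ) else 2)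
        else if i.1 + 1 = j.1 ∨ j.1 + 1 = i.1 then -1 else 0)
      - lam • (1 : Matrix (Fin n) (Fin n) ℝ)).det
      = (Polynomial.Chebyshev.U ℝ (n : ℤ)).eval (1 - lam / 2)
        - (Polynomial.Chebyshev.U ℝ ((n : ℤ) - 1)).eval (1 - lam / 2) := by
  obtain ⟨m, rfl⟩ := Nat.exists_eq_succ_of_ne_zero hn.ne'
  exact (detM lam m).1
end
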